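/- Let A, B, c ∈ ℝ with B² − A² = 1 and let ε = ±1. Then the function ω : ℝ² → ℝ defined by ω(u,v) := 2ε·arctan(exp(A·u + B·v + c)) is smooth and satisfies the hyperbolic sine-Gordon equation ∂²ω/∂v² − ∂²ω/∂u² = cos ω · sin ω at every point of ℝ². (This is the 1-soliton with spectral parameter σ, where A = (σ−σ⁻¹)/2 and B = (σ+σ⁻¹)/2.) -/

import Mathlib

/-- Partial derivative with respect to the first variable `u`. -/
noncomputable def pdu (f : ℝ × ℝ → ℝ) (p : ℝ × ℝ) : ℝ :=
  deriv (fun u => f (u, p.2)) p.1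

/-- Partial derivative with respect to the second variable `v`. -/
noncomputable def pdv (f : ℝ × ℝ → ℝ) (p : ℝ × ℝ) : ℝ :=
  deriv (fun v => f (p.1, v)) p.2

lemma phi_deriv (ε t : ℝ) :
    HasDerivAt (fun t => 2 * ε * Real.arctan (Real.exp t))
      (2 * ε * (Real.exp t / (1 + Real.exp t ^ 2))) t := by
  have h1 := (Real.hasDerivAt_arctan (Real.exp t)).comp t (Real.hasDerivAt_exp t)
  have h2 := h1.const_mul (2 * ε)
  refine h2.congr_deriv ?_
  field_simp

lemma phi2_deriv (ε t : ℝ) :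
    HasDerivAt (fun t => 2 * ε * (Real.exp t / (1 + Real.exp t ^ 2)))
      (2 * ε * (Real.exp t * (1 - Real.exp t ^ 2) / (1 + Real.exp t ^ 2) ^ 2)) t := by
  have hne : (1 + Real.exp t ^ 2) ≠ 0 := by positivity
  have hd := ((Real.hasDerivAt_exp t).div
    (((Real.hasDerivAt_exp t).pow 2).const_add 1) hne).const_mul (2 * ε)
  refine hd.congr_deriv ?_
  push_cast [Pi.pow_apply]
  ring

lemma comp_lin {f : ℝ → ℝ} {f' : ℝ → ℝ} (hf : ∀ t, HasDerivAt f (f' t) t) (a k u : ℝ) :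
    HasDerivAt (fun u => f (a * u + k)) (a * f' (a * u + k)) u := by
  have := (hf (a * u + k)).comp u (((hasDerivAt_id u).const_mul a).add_const k)
  refine this.congr_deriv ?_
  ring

lemma trig (ε : ℝ) (hε : ε = 1 ∨ ε = -1) (y : ℝ) :
    2 * ε * (y * (1 - y ^ 2) / (1 + y ^ 2) ^ 2)
      = Real.cos (2 * ε * Real.arctan y) * Real.sin (2 * ε * Real.arctan y) := by
  have hs : Real.sqrt (1 + y ^ 2) ^ 2 = 1 + y ^ 2 := Real.sq_sqrt (by positivity)
  have hn : Real.sqrt (1 + y ^ 2) ≠ 0 := by positivity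
  rcases hε with h | h <;> subst h
  · have e1 : (2:ℝ) * 1 * Real.arctan y = 2 * Real.arctan y := by ring
    rw [e1, Real.cos_two_mul, Real.sin_two_mul, Real.cos_arctan, Real.sin_arctan]
    field_simp
    rw [show Real.sqrt (1 + y ^ 2) ^ 4 = (Real.sqrt (1 + y ^ 2) ^ 2) ^ 2 by ring, hs]
    ring
  · have e1 : (2:ℝ) * (-1) * Real.arctan y = -(2 * Real.arctan y) := by ring
    rw [e1, Real.cos_neg, Real.sin_neg, Real.cos_two_mul, Real.sin_two_mul,
      Real.cos_arctan, Real.sin_arctan]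
    field_simp
    rw [show Real.sqrt (1 + y ^ 2) ^ 4 = (Real.sqrt (1 + y ^ 2) ^ 2) ^ 2 by ring, hs]
    ring

/-- The 1-soliton `ω(u,v) = 2ε·arctan(exp(A·u + B·v + c))` with `B² − A² = 1`, `ε = ±1`,
is smooth and satisfies the hyperbolic sine-Gordon equation
`∂²ω/∂v² − ∂²ω/∂u² = cos ω · sin ω` on all of `ℝ²`. -/
theorem oneSoliton_hyperbolic_sineGordon
    (A B c ε : ℝ) (hAB : B ^ 2 - A ^ 2 = 1) (hε : ε = 1 ∨ ε = -1)
    (ω : ℝ × ℝ → ℝ)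
    (hω : ω = fun p : ℝ × ℝ => 2 * ε * Real.arctan (Real.exp (A * p.1 + B * p.2 + c))) :
    ContDiff ℝ (⊤ : ℕ∞) ω ∧
      ∀ p : ℝ × ℝ,
        pdv (pdv ω) p - pdu (pdu ω) p = Real.cos (ω p) * Real.sin (ω p) := by

  set φ1 : ℝ → ℝ := fun t => 2 * ε * (Real.exp t / (1 + Real.exp t ^ 2)) with hφ1
  set φ2 : ℝ → ℝ := fun t => 2 * ε * (Real.exp t * (1 - Real.exp t ^ 2) / (1 + Real.exp t ^ 2) ^ 2)
    with hφ2
  constructor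
  · rw [hω]
    have hin : ContDiff ℝ (⊤ : ℕ∞) (fun p : ℝ × ℝ => A * p.1 + B * p.2 + c) := by fun_prop
    exact contDiff_const.mul (Real.contDiff_arctan.comp (Real.contDiff_exp.comp hin))
  · intro p
    -- first u-derivative
    have hpdu : pdu ω = fun q : ℝ × ℝ => A * φ1 (A * q.1 + B * q.2 + c) := by
      funext q
      unfold pdu
      rw [hω]
      have h := comp_lin (phi_deriv ε) A (B * q.2 + c) q.1
      simp only [← add_assoc] at h
      exact h.deriv
    -- first v-derivative
    have hpdv : pdv ω = fun q : ℝ × ℝ => B * φ1 (A * q.1 + B * q.2 + c) := by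
      funext q
      unfold pdv
      rw [hω]
      have h := comp_lin (phi_deriv ε) B (A * q.1 + c) q.2
      have h2 : (fun v => (fun t => 2 * ε * Real.arctan (Real.exp t)) (B * v + (A * q.1 + c)))
          = fun v => 2 * ε * Real.arctan (Real.exp (A * q.1 + B * v + c)) := by
        funext v; ring_nf
      rw [h2] at h
      have h3 : B * q.2 + (A * q.1 + c) = A * q.1 + B * q.2 + c := by ring
      rw [h3] at h
      exact h.deriv
    -- second derivatives
    have hpduu : pdu (pdu ω) p = A * (A * φ2 (A * p.1 + B * p.2 + c)) := by
      rw [hpdu]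
      unfold pdu
      have h := (comp_lin (phi2_deriv ε) A (B * p.2 + c) p.1).const_mul A
      simp only [← add_assoc] at h
      exact h.deriv
    have hpdvv : pdv (pdv ω) p = B * (B * φ2 (A * p.1 + B * p.2 + c)) := by
      rw [hpdv]
      unfold pdv
      have h := (comp_lin (phi2_deriv ε) B (A * p.1 + c) p.2).const_mul B
      have h2 : (fun v => B * φ1 (B * v + (A * p.1 + c)))
          = fun v => B * φ1 (A * p.1 + B * v + c) := by
        funext v
        congr 1
        ring_nf
      rw [h2] at h
      have h3 : B * p.2 + (A * p.1 + c) = A * p.1 + B * p.2 + c := by ring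
      rw [h3] at h
      exact h.deriv
    rw [hpduu, hpdvv, hω]
    simp only [hφ2]
    have key := trig ε hε (Real.exp (A * p.1 + B * p.2 + c))
    linear_combination key +
      (2 * ε * (Real.exp (A * p.1 + B * p.2 + c) * (1 - Real.exp (A * p.1 + B * p.2 + c) ^ 2) /
        (1 + Real.exp (A * p.1 + B * p.2 + c) ^ 2) ^ 2)) * hAB
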